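/- In the white component with configuration: white tokens at s, v2, x, y; black tokens at v1, v3; empty vertices v4, t (arising after moves v2→v3 by B and v4→v2 by W from the initial state with t empty), if W to move plays x→v4 or y→v4, then the continuation v3→t (B), v2→v3 (W), v1→v2 (B), s→v1 (W) is the unique legal play within the component, ending with s empty and exactly one of x,y empty. -/

import Mathlib

/-- A token type: white tokens are moved by player W, black by player B. -/
inductive Tok | White | Black
deriving DecidableEq

/-- A configuration places at most one token on each vertex. -/
abbrev Config (V : Type) := V → Option Tok

/-- The opponent of a player. -/
def other : Tok → Tok
  | Tok.White => Tok.Black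
  | Tok.Black => Tok.White

/-- A legal node-blocking move by player `p`: pick a token of type `p` at `u`
and move it along an arc `(u,v)` to an unoccupied vertex `v`. -/
def legalMove {V : Type} [DecidableEq V] (E : V → V → Prop) (p : Tok)
    (f f' : Config V) : Prop :=
  ∃ u v, E u v ∧ f u = some p ∧ f v = none ∧
    f' = Function.update (Function.update f u none) v (some p)

/-- The configuration obtained by moving a token of type `p` from `u` to `v`. -/
def mv {V : Type} [DecidableEq V] (f : Config V) (u v : V) (p : Tok) : Config V :=
  Function.update (Function.update f u none) v (some p)

/-- Vertices of the white variable component. -/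
inductive WV | s | t | x | y | v1 | v2 | v3 | v4
deriving DecidableEq

instance instFintypeWV : Fintype WV :=
  ⟨{WV.s, WV.t, WV.x, WV.y, WV.v1, WV.v2, WV.v3, WV.v4}, by intro a; cases a <;> simp⟩

/-- Arcs of the white variable component. -/
def WE : WV → WV → Prop := fun a b =>
  (a, b) ∈ ([(WV.s, WV.v1), (WV.v1, WV.v2), (WV.v2, WV.v3), (WV.v3, WV.t),
    (WV.v4, WV.t), (WV.v4, WV.v2), (WV.x, WV.v4), (WV.y, WV.v4)] : List (WV × WV))

/-- Initial state of the white component with the token at `t` removed. -/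
def wInit : Config WV := fun v =>
  match v with
  | WV.s => some Tok.White | WV.v4 => some Tok.White
  | WV.x => some Tok.White | WV.y => some Tok.White
  | WV.v1 => some Tok.Black | WV.v2 => some Tok.Black
  | WV.v3 => none | WV.t => none

/-- White component configuration: white tokens at s, v2, x, y; black tokens at
v1, v3; vertices v4 and t empty. -/
def cfg10 : Config WV := fun v =>
  match v with
  | WV.s => some Tok.White | WV.v2 => some Tok.White
  | WV.x => some Tok.White | WV.y => some Tok.White
  | WV.v1 => some Tok.Black | WV.v3 => some Tok.Black
  | WV.v4 => none | WV.t => none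

section LegalMove

variable {V : Type} [DecidableEq V] {E : V → V → Prop} {p : Tok} {f : Config V} {u v : V}

theorem legalMove_mv (huv : E u v) (hu : f u = some p) (hv : f v = none) :
    legalMove E p f (mv f u v p) :=
  ⟨u, v, huv, hu, hv, rfl⟩

theorem legalMove_iff_eq_mv
    (hunique : ∀ u' v', E u' v' → f u' = some p → f v' = none → u' = u ∧ v' = v)
    (huv : E u v) (hu : f u = some p) (hv : f v = none) (g : Config V) :
    legalMove E p f g ↔ g = mv f u v p := by
  constructor
  · rintro ⟨u', v', huv', hu', hv', rfl⟩
    obtain ⟨rfl, rfl⟩ := hunique u' v' huv' hu' hv'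
    rfl
  · rintro rfl
    exact legalMove_mv huv hu hv

end LegalMove

instance : DecidableRel WE := fun _ _ => by unfold WE; infer_instance

/-- if W plays x→v4 or y→v4 from `cfg10`, then the continuation
v3→t (B), v2→v3 (W), v1→v2 (B), s→v1 (W) is the unique legal play within the
component (each mover having exactly one legal move), ending with s empty and
exactly one of x, y empty. -/
theorem stmt_10 (z : WV) (hz : z = WV.x ∨ z = WV.y) :
    let f1 := mv cfg10 z WV.v4 Tok.White
    let f2 := mv f1 WV.v3 WV.t Tok.Black
    let f3 := mv f2 WV.v2 WV.v3 Tok.White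
    let f4 := mv f3 WV.v1 WV.v2 Tok.Black
    let f5 := mv f4 WV.s WV.v1 Tok.White
    legalMove WE Tok.White cfg10 f1 ∧
    (∀ g, legalMove WE Tok.Black f1 g ↔ g = f2) ∧
    (∀ g, legalMove WE Tok.White f2 g ↔ g = f3) ∧
    (∀ g, legalMove WE Tok.Black f3 g ↔ g = f4) ∧
    (∀ g, legalMove WE Tok.White f4 g ↔ g = f5) ∧
    f5 WV.s = none ∧ Xor' (f5 WV.x = none) (f5 WV.y = none) := by
  rcases hz with rfl | rfl <;>
    exact ⟨legalMove_mv (by decide) (by decide) (by decide),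
      legalMove_iff_eq_mv (by decide) (by decide) (by decide) (by decide),
      legalMove_iff_eq_mv (by decide) (by decide) (by decide) (by decide),
      legalMove_iff_eq_mv (by decide) (by decide) (by decide) (by decide),
      legalMove_iff_eq_mv (by decide) (by decide) (by decide) (by decide),
      by decide, by unfold Xor'; decide⟩
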